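/- Let T = T_{a,b} + cφ with a, b, c ∈ ℝ, where T_{a,b} := (a+b)(−e₁₃₅ + e₁₄₆ + e₂₃₆ + e₂₄₅) + 2a(e₃₄₇ + e₁₂₇) + 4b·e₅₆₇. If a + b = c, then σ(T)ψ₁ = −7c·ψ₁ and σ(T)ψ₂ = −7c·ψ₂ (the same eigenvalue on both spinors). If 4(a+b) = −3c, then σ(T)ψ₁ = −7c·ψ₁ and σ(T)ψ₂ = +7c·ψ₂ (opposite eigenvalues ±7c). -/

import Mathlib

open Matrix BigOperators

noncomputable section

abbrev M8 : Type := Matrix (Fin 8) (Fin 8) ℝ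

/-- 2-forms on ℝ⁷ -/
abbrev Lam2 : Type := AlternatingMap ℝ (Fin 7 → ℝ) ℝ (Fin 2)

/-- 3-forms on ℝ⁷ -/
abbrev Lam3 : Type := AlternatingMap ℝ (Fin 7 → ℝ) ℝ (Fin 3)

/-- standard basis of ℝ⁷ -/
def u (i : Fin 7) : Fin 7 → ℝ := Pi.single i 1

/-- standard spinor basis ψ₁,…,ψ₈ (0-indexed) -/
def ψ (k : Fin 8) : Fin 8 → ℝ := Pi.single k 1

/-- E_{ij} : ψ_i ↦ ψ_j, ψ_j ↦ -ψ_i -/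
def EE (i j : Fin 8) : M8 := Matrix.single j i 1 - Matrix.single i j 1

/-- Clifford multiplication by e₁,…,e₇ (0-indexed) -/
def e : Fin 7 → M8 :=
  ![EE 0 7 + EE 1 6 - EE 2 5 - EE 3 4,
    -EE 0 6 + EE 1 7 + EE 2 4 - EE 3 5,
    -EE 0 5 + EE 1 4 - EE 2 7 + EE 3 6,
    -EE 0 4 - EE 1 5 - EE 2 6 - EE 3 7,
    -EE 0 2 - EE 1 3 + EE 4 6 + EE 5 7,
    EE 0 3 - EE 1 2 - EE 4 7 + EE 5 6,
    EE 0 1 - EE 2 3 - EE 4 5 + EE 6 7]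

def pick2 (i j : Fin 7) : (Fin 7 → ℝ) →ₗ[ℝ] (Fin 2 → ℝ) :=
  LinearMap.pi fun m => LinearMap.proj (![i, j] m)

def pick3 (i j k : Fin 7) : (Fin 7 → ℝ) →ₗ[ℝ] (Fin 3 → ℝ) :=
  LinearMap.pi fun m => LinearMap.proj (![i, j, k] m)

/-- the 2-form e_i ∧ e_j -/
def w2 (i j : Fin 7) : Lam2 :=
  (Matrix.detRowAlternating : AlternatingMap ℝ (Fin 2 → ℝ) ℝ (Fin 2)).compLinearMap (pick2 i j)

/-- the 3-form e_i ∧ e_j ∧ e_k -/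
def w3 (i j k : Fin 7) : Lam3 :=
  (Matrix.detRowAlternating : AlternatingMap ℝ (Fin 3 → ℝ) ℝ (Fin 3)).compLinearMap (pick3 i j k)

/-- Clifford action of a 2-form -/
def σ2 (ω : Lam2) : M8 :=
  ∑ i : Fin 7, ∑ j : Fin 7, if i < j then ω ![u i, u j] • (e i * e j) else 0

/-- Clifford action of a 3-form -/
def σ3 (T : Lam3) : M8 :=
  ∑ i : Fin 7, ∑ j : Fin 7, ∑ k : Fin 7,
    if i < j ∧ j < k then T ![u i, u j, u k] • (e i * e j * e k) else 0

/-- the skew-symmetric 7×7 matrix A_ω associated to a 2-form ω -/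
def A2 (ω : Lam2) : Matrix (Fin 7) (Fin 7) ℝ :=
  ∑ i : Fin 7, ∑ j : Fin 7,
    if i < j then ω ![u i, u j] •
      (Matrix.single j i (1 : ℝ) - Matrix.single i j 1) else 0

/-- T is ω-invariant: the natural action of the 2-form ω on the 3-form T vanishes -/
def inv3 (ω : Lam2) (T : Lam3) : Prop :=
  ∀ X Y Z : Fin 7 → ℝ,
    T ![A2 ω *ᵥ X, Y, Z] + T ![X, A2 ω *ᵥ Y, Z] + T ![X, Y, A2 ω *ᵥ Z] = 0

/-- the standard G₂ 3-form φ = e₁₂₇+e₁₃₅−e₁₄₆−e₂₃₆−e₂₄₅+e₃₄₇+e₅₆₇ -/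
def φf : Lam3 :=
  w3 0 1 6 + w3 0 2 4 - w3 0 3 5 - w3 1 2 5 - w3 1 3 4 + w3 2 3 6 + w3 4 5 6

/-- T_{a,b} := (a+b)(−e₁₃₅+e₁₄₆+e₂₃₆+e₂₄₅) + 2a(e₃₄₇+e₁₂₇) + 4b e₅₆₇ -/
def Tab (a b : ℝ) : Lam3 :=
  (a + b) • (-w3 0 2 4 + w3 0 3 5 + w3 1 2 5 + w3 1 3 4)
    + (2 * a) • (w3 2 3 6 + w3 0 1 6) + (4 * b) • w3 4 5 6

/-!
σ is linear and sends e_{ijk} (i < j < k) to the Clifford product e_i e_j e_k, and T_{a,b} + cφ is a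
combination of the seven monomials of φ. Each of the seven products acts diagonally on ψ₁ and ψ₂:
on ψ₁ by −φ_{ijk}, so σ(T)ψ₁ = −7c ψ₁ for all a, b; on ψ₂ the four monomials with coefficient
±(a+b) in T_{a,b} change sign, so σ(T)ψ₂ = (c − 8(a+b)) ψ₂, which is −7c or 7c under the two conditions.
-/

lemma w3_apply (p q r : Fin 7) (x y z : Fin 7 → ℝ) :
    w3 p q r ![x, y, z] =
      x p * y q * z r - x p * y r * z q - x q * y p * z r
        + x q * y r * z p + x r * y p * z q - x r * y q * z p := by
  change Matrix.det (Matrix.of fun m => pick3 p q r (![x, y, z] m)) = _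
  rw [det_fin_three]
  simp [pick3]

lemma w3_apply_u {i j k p q r : Fin 7} (hij : i < j) (hjk : j < k) (hpq : p < q) (hqr : q < r) :
    w3 i j k ![u p, u q, u r] = if p = i ∧ q = j ∧ r = k then 1 else 0 := by
  simp only [w3_apply, u, Pi.single_apply]
  split_ifs <;> first | omega | norm_num

lemma σ3_eq_sum (T : Lam3) : σ3 T = ∑ i : Fin 7, ∑ j : Fin 7, ∑ k : Fin 7,
    T ![u i, u j, u k] • if i < j ∧ j < k then e i * e j * e k else 0 := by
  simp only [σ3, smul_ite, smul_zero]

def σ3ₗ : Lam3 →ₗ[ℝ] M8 where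
  toFun := σ3
  map_add' S T := by
    simp only [σ3_eq_sum, AlternatingMap.add_apply, add_smul, Finset.sum_add_distrib]
  map_smul' c T := by
    simp only [σ3_eq_sum, AlternatingMap.smul_apply, smul_eq_mul, mul_smul, Finset.smul_sum,
      RingHom.id_apply]

lemma σ3ₗ_apply (T : Lam3) : σ3ₗ T = σ3 T := rfl

lemma σ3_w3 {i j k : Fin 7} (hij : i < j) (hjk : j < k) : σ3 (w3 i j k) = e i * e j * e k := by
  -- nested innermost-first, so that `Finset.sum_ite_eq'` collapses the sums over r, q, p in turn
  have summand (p q r : Fin 7) :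
      (if p < q ∧ q < r then w3 i j k ![u p, u q, u r] • (e p * e q * e r) else 0) =
        if r = k then if q = j then if p = i then e i * e j * e k else 0 else 0 else 0 := by
    split_ifs with h <;> simp_all [w3_apply_u hij hjk]
  simp only [σ3, summand, Finset.sum_ite_eq', Finset.mem_univ, if_true]

lemma Tab_add_smul_φf (a b c : ℝ) :
    Tab a b + c • φf =
      (2 * a + c) • (w3 0 1 6 + w3 2 3 6) + (c - (a + b)) • w3 0 2 4
        + (a + b - c) • (w3 0 3 5 + w3 1 2 5 + w3 1 3 4) + (4 * b + c) • w3 4 5 6 := by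
  simp only [Tab, φf]
  module

lemma σ3_Tab_add_smul_φf (a b c : ℝ) :
    σ3 (Tab a b + c • φf) =
      (2 * a + c) • (e 0 * e 1 * e 6 + e 2 * e 3 * e 6) + (c - (a + b)) • (e 0 * e 2 * e 4)
        + (a + b - c) • (e 0 * e 3 * e 5 + e 1 * e 2 * e 5 + e 1 * e 3 * e 4)
        + (4 * b + c) • (e 4 * e 5 * e 6) := by
  rw [Tab_add_smul_φf, ← σ3ₗ_apply]
  simp only [map_add, map_smul, σ3ₗ_apply, σ3_w3, Fin.reduceLT]

lemma EE_mulVec_ψ (i j m : Fin 8) :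
    EE i j *ᵥ ψ m = (if m = i then ψ j else 0) - (if m = j then ψ i else 0) := by
  ext x
  simp only [EE, ψ, mulVec_single_one, col_apply, Matrix.sub_apply, Matrix.single_apply,
    Pi.sub_apply]
  split_ifs <;> simp [Pi.single_apply] <;> grind

lemma φ_triples_mulVec_ψ_zero :
    (e 0 * e 1 * e 6) *ᵥ ψ 0 = -ψ 0 ∧ (e 2 * e 3 * e 6) *ᵥ ψ 0 = -ψ 0 ∧
    (e 0 * e 2 * e 4) *ᵥ ψ 0 = -ψ 0 ∧ (e 0 * e 3 * e 5) *ᵥ ψ 0 = ψ 0 ∧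
    (e 1 * e 2 * e 5) *ᵥ ψ 0 = ψ 0 ∧ (e 1 * e 3 * e 4) *ᵥ ψ 0 = ψ 0 ∧
    (e 4 * e 5 * e 6) *ᵥ ψ 0 = -ψ 0 := by
  simp [← mulVec_mulVec, e, add_mulVec, sub_mulVec, neg_mulVec, mulVec_neg, EE_mulVec_ψ]

lemma φ_triples_mulVec_ψ_one :
    (e 0 * e 1 * e 6) *ᵥ ψ 1 = -ψ 1 ∧ (e 2 * e 3 * e 6) *ᵥ ψ 1 = -ψ 1 ∧
    (e 0 * e 2 * e 4) *ᵥ ψ 1 = ψ 1 ∧ (e 0 * e 3 * e 5) *ᵥ ψ 1 = -ψ 1 ∧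
    (e 1 * e 2 * e 5) *ᵥ ψ 1 = -ψ 1 ∧ (e 1 * e 3 * e 4) *ᵥ ψ 1 = -ψ 1 ∧
    (e 4 * e 5 * e 6) *ᵥ ψ 1 = -ψ 1 := by
  simp [← mulVec_mulVec, e, add_mulVec, sub_mulVec, neg_mulVec, mulVec_neg, EE_mulVec_ψ]

lemma σ3_Tab_add_smul_φf_mulVec_ψ_zero (a b c : ℝ) :
    σ3 (Tab a b + c • φf) *ᵥ ψ 0 = (-7 * c) • ψ 0 := by
  obtain ⟨h016, h236, h024, h035, h125, h134, h456⟩ := φ_triples_mulVec_ψ_zero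
  simp only [σ3_Tab_add_smul_φf, add_mulVec, smul_mulVec, h016, h236, h024, h035, h125, h134,
    h456]
  module

lemma σ3_Tab_add_smul_φf_mulVec_ψ_one (a b c : ℝ) :
    σ3 (Tab a b + c • φf) *ᵥ ψ 1 = (c - 8 * (a + b)) • ψ 1 := by
  obtain ⟨h016, h236, h024, h035, h125, h134, h456⟩ := φ_triples_mulVec_ψ_one
  simp only [σ3_Tab_add_smul_φf, add_mulVec, smul_mulVec, h016, h236, h024, h035, h125, h134,
    h456]
  module

theorem stmt_9 (a b c : ℝ) :
    (a + b = c →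
      σ3 (Tab a b + c • φf) *ᵥ ψ 0 = (-7 * c) • ψ 0 ∧
      σ3 (Tab a b + c • φf) *ᵥ ψ 1 = (-7 * c) • ψ 1) ∧
    (4 * (a + b) = -3 * c →
      σ3 (Tab a b + c • φf) *ᵥ ψ 0 = (-7 * c) • ψ 0 ∧
      σ3 (Tab a b + c • φf) *ᵥ ψ 1 = (7 * c) • ψ 1) := by
  have eig₂ := σ3_Tab_add_smul_φf_mulVec_ψ_one a b c
  refine ⟨fun h => ⟨σ3_Tab_add_smul_φf_mulVec_ψ_zero a b c, ?_⟩,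
    fun h => ⟨σ3_Tab_add_smul_φf_mulVec_ψ_zero a b c, ?_⟩⟩
  · rwa [show c - 8 * (a + b) = -7 * c by linarith] at eig₂
  · rwa [show c - 8 * (a + b) = 7 * c by linarith] at eig₂
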